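/- Assume Φ satisfies the growth condition and M_Φ ≠ ∅. Then C_Φ̂ = C_Φ, where for a convex function Ψ, C_Ψ := ⋂_{Q ∈ M_Ψ} cl_{L¹(Q)}(K − L¹_+(Q)), and Φ̂ is the modification of Φ that is linear on [0,1) with slope equal to the left derivative of Φ at 1. -/

import Mathlib

open MeasureTheory Set ENNReal

noncomputable section

variable {Ω : Type*} [MeasurableSpace Ω]

/-- A wedge: nonempty, closed under addition and nonnegative scalar multiplication. -/
def IsWedgeF {V : Type*} [AddCommMonoid V] [SMul ℝ V] (C : Set V) : Prop :=
  C.Nonempty ∧ (∀ x ∈ C, ∀ y ∈ C, x + y ∈ C) ∧ ∀ c : ℝ, 0 ≤ c → ∀ x ∈ C, c • x ∈ C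

/-- The set `M₁(P;K)` of separating measures for the wedge `K ⊆ L⁰`. -/
def Msep (P : Measure Ω) (K : Set (Ω →ₘ[P] ℝ)) : Set (Measure Ω) :=
  {Q | IsProbabilityMeasure Q ∧ Q ≪ P ∧
    ∀ X ∈ K, Integrable (X : Ω → ℝ) Q ∧ ∫ ω, X ω ∂Q ≤ 0}

/-- Positive part of an extended-real value, as an extended nonnegative real. -/
def epos (x : EReal) : ℝ≥0∞ := if x = ⊤ then ⊤ else ENNReal.ofReal x.toReal

/-- Convexity of `Φ : [0,∞) → (−∞,∞]` on the nonnegative half-line. -/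
def ConvexOnNonneg (Φ : ℝ → EReal) : Prop :=
  ∀ x ∈ Ici (0:ℝ), ∀ y ∈ Ici (0:ℝ), ∀ t ∈ Icc (0:ℝ) 1,
    Φ (t * x + (1 - t) * y) ≤ (t : EReal) * Φ x + ((1 - t : ℝ) : EReal) * Φ y

/-- The growth condition on `Φ` (reasonable asymptotic elasticity). -/
def GrowthCond (Φ : ℝ → EReal) : Prop :=
  ∀ l0 l1 : ℝ, 0 < l0 → l0 ≤ l1 → ∃ a : ℝ, 0 < a ∧ ∃ b : ℝ, 0 < b ∧
    ∀ y : ℝ, 0 < y → ∀ l ∈ Icc l0 l1,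
      epos (Φ (l * y)) ≤ ENNReal.ofReal a * epos (Φ y) + ENNReal.ofReal (b * (y + 1))

/-- `Q` has finite entropy: `E_P[Φ⁺(dQ/dP)] < ∞`. -/
def FiniteEntropy (Φ : ℝ → EReal) (P Q : Measure Ω) : Prop :=
  ∫⁻ ω, epos (Φ ((Q.rnDeriv P ω).toReal)) ∂P < ⊤

/-- `Q` has finite loss-entropy: `E_P[Φ⁺(dQ/dP) 1_{dQ/dP ≥ 1}] < ∞`. -/
def FiniteLossEntropy (Φ : ℝ → EReal) (P Q : Measure Ω) : Prop :=
  ∫⁻ ω in {ω | 1 ≤ (Q.rnDeriv P ω).toReal},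
    epos (Φ ((Q.rnDeriv P ω).toReal)) ∂P < ⊤

/-- The set `M_Φ` of separating measures with finite entropy. -/
def MPhi (Φ : ℝ → EReal) (P : Measure Ω) (K : Set (Ω →ₘ[P] ℝ)) : Set (Measure Ω) :=
  {Q ∈ Msep P K | FiniteEntropy Φ P Q}

/-- The set `M̂_Φ` of separating measures with finite loss-entropy. -/
def MPhiHat (Φ : ℝ → EReal) (P : Measure Ω) (K : Set (Ω →ₘ[P] ℝ)) : Set (Measure Ω) :=
  {Q ∈ Msep P K | FiniteLossEntropy Φ P Q}

/-- `C(MM) = ⋂_{Q ∈ MM} cl_{L¹(Q)} (K − L¹₊(Q))`: contingent claims which lie,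
for every `Q ∈ MM`, in the `L¹(Q)`-norm closure of `K − L¹₊(Q)`. -/
def CSet (P : Measure Ω) (K : Set (Ω →ₘ[P] ℝ)) (MM : Set (Measure Ω)) :
    Set (Ω →ₘ[P] ℝ) :=
  {X | ∀ Q ∈ MM, Integrable (X : Ω → ℝ) Q ∧
    ∀ ε : ℝ, 0 < ε → ∃ g ∈ K, ∃ p : Ω → ℝ, Integrable p Q ∧ (0 ≤ᵐ[Q] p) ∧
      ∫ ω, |X ω - (g ω - p ω)| ∂Q < ε}

section Aux

lemma epos_coe (r : ℝ) : epos (r : EReal) = ENNReal.ofReal r := by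
  simp [epos]

lemma epos_lt_top {x : EReal} (h : x ≠ ⊤) : epos x < ⊤ := by
  simp [epos, h]

lemma epos_mono {x y : EReal} (h : x ≤ y) : epos x ≤ epos y := by
  unfold epos
  by_cases hy : y = ⊤
  · simp [hy]
  · have hx : x ≠ ⊤ := fun h' => hy (top_le_iff.mp (h' ▸ h))
    simp only [hx, hy, if_neg, if_false]
    by_cases hxb : x = ⊥
    · simp [hxb]
    · exact ENNReal.ofReal_le_ofReal (EReal.toReal_le_toReal h hxb hy)

lemma epos_add_le {x y : EReal} (hx : x ≠ ⊥) (hy : y ≠ ⊥) :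
    epos (x + y) ≤ epos x + epos y := by
  by_cases hxt : x = ⊤
  · subst hxt; rw [EReal.top_add_of_ne_bot hy]; simp [epos]
  by_cases hyt : y = ⊤
  · subst hyt; rw [EReal.add_top_of_ne_bot hx]; simp [epos]
  · have ex : x = ((x.toReal : ℝ) : EReal) := (EReal.coe_toReal hxt hx).symm
    have ey : y = ((y.toReal : ℝ) : EReal) := (EReal.coe_toReal hyt hy).symm
    rw [ex, ey, ← EReal.coe_add, epos_coe, epos_coe, epos_coe]
    exact ENNReal.ofReal_add_le

lemma coe_mul_ne_bot {t : ℝ} (ht : 0 ≤ t) {x : EReal} (hx : x ≠ ⊥) :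
    (t : EReal) * x ≠ ⊥ := by
  rcases ht.eq_or_lt with h | h
  · subst h; simp
  · induction x with
    | bot => exact absurd rfl hx
    | coe r => rw [← EReal.coe_mul]; exact EReal.coe_ne_bot _
    | top => rw [EReal.coe_mul_top_of_pos h]; simp

lemma epos_coe_mul_le {t : ℝ} (ht : 0 ≤ t) (x : EReal) :
    epos ((t : EReal) * x) ≤ ENNReal.ofReal t * epos x := by
  rcases ht.eq_or_lt with h | h
  · subst h; simp [epos]
  · induction x with
    | bot =>
        rw [EReal.coe_mul_bot_of_pos h]; simp [epos]
    | coe r =>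
        rw [← EReal.coe_mul, epos_coe, epos_coe, ENNReal.ofReal_mul ht]
    | top =>
        rw [EReal.coe_mul_top_of_pos h]
        simp [epos, ENNReal.mul_top, (ENNReal.ofReal_pos.2 h).ne']

variable {Φ : ℝ → EReal}


lemma epos_between (hconv : ConvexOnNonneg Φ) (hbot : ∀ x : ℝ, 0 ≤ x → Φ x ≠ ⊥)
    {u v z : ℝ} (hu : 0 ≤ u) (hv : 0 ≤ v) (h1 : u ≤ z) (h2 : z ≤ v) :
    epos (Φ z) ≤ epos (Φ u) + epos (Φ v) := by
  rcases eq_or_lt_of_le (h1.trans h2) with he | hlt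
  · have hz : z = u := le_antisymm (he ▸ h2) h1
    subst hz; exact le_self_add
  · set t : ℝ := (v - z) / (v - u) with htdef
    have hvu : 0 < v - u := by linarith
    have ht0 : 0 ≤ t := div_nonneg (by linarith) hvu.le
    have ht1 : t ≤ 1 := (div_le_one hvu).2 (by linarith)
    have hz : t * u + (1 - t) * v = z := by
      have : t * (v - u) = v - z := by
        rw [htdef, div_mul_cancel₀ _ hvu.ne']
      nlinarith [this]
    have h := hconv u hu v hv t ⟨ht0, ht1⟩
    rw [hz] at h
    calc epos (Φ z) ≤ epos ((t : EReal) * Φ u + ((1 - t : ℝ) : EReal) * Φ v) :=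
          epos_mono h
      _ ≤ epos ((t : EReal) * Φ u) + epos (((1 - t : ℝ) : EReal) * Φ v) :=
          epos_add_le (coe_mul_ne_bot ht0 (hbot u hu)) (coe_mul_ne_bot (by linarith) (hbot v hv))
      _ ≤ ENNReal.ofReal t * epos (Φ u) + ENNReal.ofReal (1 - t) * epos (Φ v) :=
          add_le_add (epos_coe_mul_le ht0 _) (epos_coe_mul_le (by linarith) _)
      _ ≤ 1 * epos (Φ u) + 1 * epos (Φ v) := by
          gcongr
          · exact ENNReal.ofReal_le_one.2 ht1
          · exact ENNReal.ofReal_le_one.2 (by linarith)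
      _ = epos (Φ u) + epos (Φ v) := by rw [one_mul, one_mul]

lemma exists_phi (hconv : ConvexOnNonneg Φ) (hfin : ∀ x : ℝ, 0 < x → Φ x ≠ ⊤)
    (hbot : ∀ x : ℝ, 0 ≤ x → Φ x ≠ ⊥) :
    ∃ φ : ℝ → ℝ≥0∞, Measurable φ ∧ ∀ x : ℝ, 0 ≤ x → φ x = epos (Φ x) := by
  set f : ℝ → ℝ := fun x => (Φ x).toReal with hf
  have hcn : ConvexOn ℝ (Ioi (0:ℝ)) f := by
    refine ⟨convex_Ioi 0, fun x hx y hy a b ha hb hab => ?_⟩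
    simp only [smul_eq_mul]
    have hx0 : (0:ℝ) < x := hx
    have hy0 : (0:ℝ) < y := hy
    have hb' : 1 - a = b := by linarith
    have h := hconv x hx0.le y hy0.le a ⟨ha, by linarith⟩
    rw [hb'] at h
    have hcomb : 0 < a * x + b * y := by
      rcases ha.eq_or_lt with h0 | h0
      · have : b = 1 := by linarith
        simp [← h0, this, hy0]
      · have : 0 ≤ b * y := mul_nonneg hb hy0.le
        nlinarith
    have ex : Φ x = ((f x : ℝ) : EReal) := (EReal.coe_toReal (hfin x hx0) (hbot x hx0.le)).symm
    have ey : Φ y = ((f y : ℝ) : EReal) := (EReal.coe_toReal (hfin y hy0) (hbot y hy0.le)).symm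
    have ec : Φ (a * x + b * y) = ((f (a * x + b * y) : ℝ) : EReal) :=
      (EReal.coe_toReal (hfin _ hcomb) (hbot _ hcomb.le)).symm
    rw [ex, ey, ec, ← EReal.coe_mul, ← EReal.coe_mul, ← EReal.coe_add] at h
    exact_mod_cast h
  have hcont : ContinuousOn f (Ioi 0) := hcn.continuousOn isOpen_Ioi
  have hcont' : ContinuousOn (fun x => ENNReal.ofReal (f x)) (Ioi 0) :=
    ENNReal.continuous_ofReal.comp_continuousOn hcont
  refine ⟨fun x => if 0 < x then ENNReal.ofReal (f x) else epos (Φ 0), ?_, ?_⟩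
  · apply measurable_of_isOpen
    intro s hs
    have : (fun x => if 0 < x then ENNReal.ofReal (f x) else epos (Φ 0)) ⁻¹' s
        = (Ioi (0:ℝ) ∩ (fun x => ENNReal.ofReal (f x)) ⁻¹' s)
          ∪ (Iic (0:ℝ) ∩ {x : ℝ | epos (Φ 0) ∈ s}) := by
      ext x
      by_cases hx : 0 < x
      · simp [hx, not_le.2 hx]
      · simp [hx, not_lt.1 hx]
    rw [this]
    refine MeasurableSet.union ?_ ?_
    · exact (hcont'.isOpen_inter_preimage isOpen_Ioi hs).measurableSet
    · by_cases hc : epos (Φ 0) ∈ s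
      · simp only [hc, setOf_true, inter_univ]; exact measurableSet_Iic
      · simp only [hc, setOf_false, inter_empty]; exact MeasurableSet.empty
  · intro x hx
    rcases hx.eq_or_lt with h | h
    · simp [← h]
    · simp only [h, if_pos]
      rw [epos]
      rw [if_neg (hfin x h)]
lemma mix_mem (P : Measure Ω) [IsProbabilityMeasure P] (K : Set (Ω →ₘ[P] ℝ))
    {Φ : ℝ → EReal} (hconv : ConvexOnNonneg Φ)
    (hfin : ∀ x : ℝ, 0 < x → Φ x ≠ ⊤) (hbot : ∀ x : ℝ, 0 ≤ x → Φ x ≠ ⊥)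
    (hgrowth : GrowthCond Φ)
    {Q₀ Q₁ : Measure Ω} (h₀ : Q₀ ∈ MPhi Φ P K) (h₁sep : Q₁ ∈ Msep P K)
    (h₁loss : FiniteLossEntropy Φ P Q₁) :
    ((2⁻¹ : NNReal) • Q₀ + (2⁻¹ : NNReal) • Q₁) ∈ MPhi Φ P K := by
  obtain ⟨⟨hp₀, hac₀, hK₀⟩, hent₀⟩ := h₀
  obtain ⟨hp₁, hac₁, hK₁⟩ := h₁sep
  haveI := hp₀; haveI := hp₁
  set Q : Measure Ω := (2⁻¹ : NNReal) • Q₀ + (2⁻¹ : NNReal) • Q₁ with hQdef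
  have hc : ((2⁻¹ : NNReal) : ℝ≥0∞) ≠ 0 := by norm_num
  have hc' : ((2⁻¹ : NNReal) : ℝ≥0∞) ≠ ∞ := by norm_num
  constructor
  · refine ⟨⟨?_⟩, ?_, ?_⟩
    · show Q Set.univ = 1
      rw [hQdef, Measure.add_apply, Measure.smul_apply, Measure.smul_apply,
        measure_univ, measure_univ]
      simp only [ENNReal.smul_def, smul_eq_mul, mul_one]
      rw [show ((2⁻¹ : NNReal) : ℝ≥0∞) = 2⁻¹ by
        rw [ENNReal.coe_inv (by norm_num)]; norm_num]
      exact ENNReal.inv_two_add_inv_two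
    · intro s hs
      rw [hQdef]
      simp [Measure.add_apply, Measure.smul_apply, hac₀ hs, hac₁ hs]
    · intro X hX
      have i₀ := (hK₀ X hX).1
      have i₁ := (hK₁ X hX).1
      have i₀' : Integrable (X : Ω → ℝ) ((2⁻¹ : NNReal) • Q₀) := by
        rw [ENNReal.smul_def]; exact (integrable_smul_measure hc hc').2 i₀
      have i₁' : Integrable (X : Ω → ℝ) ((2⁻¹ : NNReal) • Q₁) := by
        rw [ENNReal.smul_def]; exact (integrable_smul_measure hc hc').2 i₁
      refine ⟨integrable_add_measure.2 ⟨i₀', i₁'⟩, ?_⟩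
      rw [integral_add_measure i₀' i₁', ENNReal.smul_def, ENNReal.smul_def,
        integral_smul_measure, integral_smul_measure]
      have ht : ((2⁻¹ : NNReal) : ℝ≥0∞).toReal = 2⁻¹ := by norm_num
      rw [ht]
      have := (hK₀ X hX).2
      have := (hK₁ X hX).2
      have h2 : (0:ℝ) ≤ 2⁻¹ := by norm_num
      simp only [smul_eq_mul]
      nlinarith
  · -- FiniteEntropy
    obtain ⟨a, ha, b, hb, hG⟩ := hgrowth 2⁻¹ 2⁻¹ (by norm_num) le_rfl
    obtain ⟨φ, hφm, hφ⟩ := exists_phi hconv hfin hbot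
    have hmr0 : Measurable (fun ω => (Q₀.rnDeriv P ω).toReal) :=
      (Measure.measurable_rnDeriv Q₀ P).ennreal_toReal
    have hmr1 : Measurable (fun ω => (Q₁.rnDeriv P ω).toReal) :=
      (Measure.measurable_rnDeriv Q₁ P).ennreal_toReal
    set r0 : Ω → ℝ := fun ω => (Q₀.rnDeriv P ω).toReal with hr0
    set r1 : Ω → ℝ := fun ω => (Q₁.rnDeriv P ω).toReal with hr1
    have mφ0 : Measurable fun ω => φ (r0 ω) := hφm.comp hmr0
    have hr0nn : ∀ ω, 0 ≤ r0 ω := fun ω => ENNReal.toReal_nonneg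
    have hr1nn : ∀ ω, 0 ≤ r1 ω := fun ω => ENNReal.toReal_nonneg
    have hent₀' : ∫⁻ ω, epos (Φ (r0 ω)) ∂P < ⊤ := hent₀
    have h₁loss' : ∫⁻ ω in {ω | 1 ≤ r1 ω}, epos (Φ (r1 ω)) ∂P < ⊤ := h₁loss
    have hae : ∀ᵐ ω ∂P, (Q.rnDeriv P ω).toReal = 2⁻¹ * r0 ω + 2⁻¹ * r1 ω := by
      have h1 : Q.rnDeriv P =ᵐ[P]
          ((2⁻¹ : NNReal) • Q₀).rnDeriv P + ((2⁻¹ : NNReal) • Q₁).rnDeriv P :=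
        Measure.rnDeriv_add' ((2⁻¹ : NNReal) • Q₀) ((2⁻¹ : NNReal) • Q₁) P
      have h2 := Measure.rnDeriv_smul_left' Q₀ P (2⁻¹ : NNReal)
      have h3 := Measure.rnDeriv_smul_left' Q₁ P (2⁻¹ : NNReal)
      have h4 := Measure.rnDeriv_lt_top Q₀ P
      have h5 := Measure.rnDeriv_lt_top Q₁ P
      filter_upwards [h1, h2, h3, h4, h5] with ω e1 e2 e3 e4 e5
      rw [Pi.add_apply] at e1
      rw [e1, e2, e3, Pi.smul_apply, Pi.smul_apply,
        ENNReal.smul_def, ENNReal.smul_def, smul_eq_mul, smul_eq_mul,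
        ENNReal.toReal_add (ENNReal.mul_ne_top ENNReal.coe_ne_top e4.ne)
          (ENNReal.mul_ne_top ENNReal.coe_ne_top e5.ne),
        ENNReal.toReal_mul, ENNReal.toReal_mul]
      norm_num
      rfl
    show ∫⁻ ω, epos (Φ ((Q.rnDeriv P ω).toReal)) ∂P < ⊤
    have key : ∫⁻ ω, epos (Φ ((Q.rnDeriv P ω).toReal)) ∂P
        = ∫⁻ ω, epos (Φ (2⁻¹ * r0 ω + 2⁻¹ * r1 ω)) ∂P := by
      apply lintegral_congr_ae
      filter_upwards [hae] with ω h
      rw [h]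
    rw [key]
    set A : Set Ω := {ω | 1 ≤ r1 ω} with hA
    have hAm : MeasurableSet A := measurableSet_le measurable_const hmr1
    rw [← lintegral_add_compl _ hAm]
    have pA : ∫⁻ ω in A, epos (Φ (2⁻¹ * r0 ω + 2⁻¹ * r1 ω)) ∂P < ⊤ := by
      have hb1 : ∫⁻ ω in A, epos (Φ (2⁻¹ * r0 ω + 2⁻¹ * r1 ω)) ∂P
          ≤ ∫⁻ ω in A, (φ (r0 ω) + φ (r1 ω)) ∂P := by
        apply lintegral_mono_ae
        rw [ae_restrict_iff' hAm]
        refine ae_of_all _ fun ω hω => ?_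
        have h1 : min (r0 ω) (r1 ω) ≤ 2⁻¹ * r0 ω + 2⁻¹ * r1 ω := by
          rcases le_total (r0 ω) (r1 ω) with h | h
          · rw [min_eq_left h]; nlinarith
          · rw [min_eq_right h]; nlinarith
        have h2 : 2⁻¹ * r0 ω + 2⁻¹ * r1 ω ≤ max (r0 ω) (r1 ω) := by
          rcases le_total (r0 ω) (r1 ω) with h | h
          · rw [max_eq_right h]; nlinarith
          · rw [max_eq_left h]; nlinarith
        have hbtw := epos_between hconv hbot (le_min (hr0nn ω) (hr1nn ω))
          ((hr0nn ω).trans (le_max_left _ _)) h1 h2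
        refine hbtw.trans ?_
        rcases le_total (r0 ω) (r1 ω) with h | h
        · rw [min_eq_left h, max_eq_right h, hφ _ (hr0nn ω), hφ _ (hr1nn ω)]
        · rw [min_eq_right h, max_eq_left h, hφ _ (hr1nn ω), hφ _ (hr0nn ω)]
          exact le_of_eq (add_comm _ _)
      refine lt_of_le_of_lt hb1 ?_
      rw [lintegral_add_left mφ0]
      refine ENNReal.add_lt_top.2 ⟨?_, ?_⟩
      · refine lt_of_le_of_lt (setLIntegral_le_lintegral _ _) ?_
        have e : ∫⁻ ω, φ (r0 ω) ∂P = ∫⁻ ω, epos (Φ (r0 ω)) ∂P :=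
          lintegral_congr fun ω => by rw [hφ _ (hr0nn ω)]
        rw [e]; exact hent₀'
      · have e : ∫⁻ ω in A, φ (r1 ω) ∂P = ∫⁻ ω in A, epos (Φ (r1 ω)) ∂P :=
          lintegral_congr fun ω => by rw [hφ _ (hr1nn ω)]
        rw [e]; exact h₁loss'
    have pC : ∫⁻ ω in Aᶜ, epos (Φ (2⁻¹ * r0 ω + 2⁻¹ * r1 ω)) ∂P < ⊤ := by
      set c2 : ℝ≥0∞ := epos (Φ 2⁻¹) + epos (Φ 1) with hc2
      have hc2fin : c2 < ⊤ := ENNReal.add_lt_top.2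
        ⟨epos_lt_top (hfin _ (by norm_num)), epos_lt_top (hfin _ one_pos)⟩
      have hbnd : ∀ ω, ω ∈ Aᶜ → epos (Φ (2⁻¹ * r0 ω + 2⁻¹ * r1 ω))
          ≤ (ENNReal.ofReal a + 1) * φ (r0 ω) + ENNReal.ofReal (b * (r0 ω + 1)) + c2 := by
        intro ω hω
        have hx1 : r1 ω < 1 := not_le.1 hω
        by_cases hx0 : r0 ω = 0
        · have h1 : (0:ℝ) ≤ 2⁻¹ * r0 ω + 2⁻¹ * r1 ω := by
            have := hr0nn ω; have := hr1nn ω; nlinarith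
          have h2 : 2⁻¹ * r0 ω + 2⁻¹ * r1 ω ≤ 2⁻¹ := by
            rw [hx0]; nlinarith
          have hbtw := epos_between hconv hbot le_rfl (by norm_num : (0:ℝ) ≤ 2⁻¹) h1 h2
          refine hbtw.trans ?_
          have e0 : epos (Φ 0) = φ (r0 ω) := by rw [hx0, hφ 0 le_rfl]
          rw [e0]
          calc φ (r0 ω) + epos (Φ 2⁻¹)
              ≤ (ENNReal.ofReal a + 1) * φ (r0 ω) + c2 :=
                add_le_add (le_mul_of_one_le_left zero_le le_add_self) le_self_add
            _ ≤ (ENNReal.ofReal a + 1) * φ (r0 ω) + ENNReal.ofReal (b * (r0 ω + 1)) + c2 := by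
                rw [add_assoc]
                exact add_le_add_right (le_add_self) _
        · have hx0' : 0 < r0 ω := lt_of_le_of_ne (hr0nn ω) (Ne.symm hx0)
          have h1 : 2⁻¹ * r0 ω ≤ 2⁻¹ * r0 ω + 2⁻¹ * r1 ω := by
            have := hr1nn ω; nlinarith
          have h2 : 2⁻¹ * r0 ω + 2⁻¹ * r1 ω ≤ 2⁻¹ * (r0 ω + 1) := by nlinarith
          have step1 := epos_between hconv hbot (by positivity) (by positivity) h1 h2
          have step2 : epos (Φ (2⁻¹ * r0 ω)) ≤
              ENNReal.ofReal a * φ (r0 ω) + ENNReal.ofReal (b * (r0 ω + 1)) := by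
            have hg2 := hG (r0 ω) hx0' 2⁻¹ ⟨le_rfl, le_rfl⟩
            rwa [← hφ _ (hr0nn ω)] at hg2
          have step3 : epos (Φ (2⁻¹ * (r0 ω + 1))) ≤
              epos (Φ 2⁻¹) + (epos (Φ 1) + φ (r0 ω)) := by
            have hl : (2⁻¹:ℝ) ≤ 2⁻¹ * (r0 ω + 1) := by nlinarith [hr0nn ω]
            have hv2 : 2⁻¹ * (r0 ω + 1) ≤ max (r0 ω) 1 := by
              rcases le_total (r0 ω) 1 with h | h
              · exact le_trans (by nlinarith) (le_max_right _ _)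
              · exact le_trans (by nlinarith) (le_max_left _ _)
            have hbtw := epos_between hconv hbot (by norm_num : (0:ℝ) ≤ 2⁻¹)
              (le_trans zero_le_one (le_max_right _ _)) hl hv2
            refine hbtw.trans (add_le_add_right ?_ _)
            rcases le_total (r0 ω) 1 with h | h
            · rw [max_eq_right h]; exact le_self_add
            · rw [max_eq_left h, ← hφ _ (hr0nn ω)]
              exact le_add_self
          calc epos (Φ (2⁻¹ * r0 ω + 2⁻¹ * r1 ω))
              ≤ epos (Φ (2⁻¹ * r0 ω)) + epos (Φ (2⁻¹ * (r0 ω + 1))) := step1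
            _ ≤ (ENNReal.ofReal a * φ (r0 ω) + ENNReal.ofReal (b * (r0 ω + 1)))
                + (epos (Φ 2⁻¹) + (epos (Φ 1) + φ (r0 ω))) := add_le_add step2 step3
            _ = (ENNReal.ofReal a + 1) * φ (r0 ω) + ENNReal.ofReal (b * (r0 ω + 1)) + c2 := by
                rw [hc2]; ring
      have hbig : ∫⁻ ω in Aᶜ, epos (Φ (2⁻¹ * r0 ω + 2⁻¹ * r1 ω)) ∂P
          ≤ ∫⁻ ω, ((ENNReal.ofReal a + 1) * φ (r0 ω)
              + ENNReal.ofReal (b * (r0 ω + 1)) + c2) ∂P := by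
        refine le_trans ?_ (setLIntegral_le_lintegral Aᶜ _)
        apply lintegral_mono_ae
        rw [ae_restrict_iff' hAm.compl]
        exact ae_of_all _ hbnd
      refine lt_of_le_of_lt hbig ?_
      have m1 : Measurable fun ω => (ENNReal.ofReal a + 1) * φ (r0 ω) :=
        mφ0.const_mul _
      rw [lintegral_add_right _ measurable_const, lintegral_add_left m1,
        lintegral_const_mul _ mφ0]
      have e : ∫⁻ ω, φ (r0 ω) ∂P = ∫⁻ ω, epos (Φ (r0 ω)) ∂P :=
        lintegral_congr fun ω => by rw [hφ _ (hr0nn ω)]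
      rw [e, lintegral_const, measure_univ, mul_one]
      have hint2 : ∫⁻ ω, ENNReal.ofReal (b * (r0 ω + 1)) ∂P < ⊤ := by
        have hle : ∀ ω, ENNReal.ofReal (b * (r0 ω + 1))
            ≤ ENNReal.ofReal b * (Q₀.rnDeriv P ω + 1) := by
          intro ω
          rw [ENNReal.ofReal_mul hb.le]
          refine mul_le_mul_right ?_ _
          refine le_trans ENNReal.ofReal_add_le (add_le_add ?_ ?_)
          · exact ENNReal.ofReal_toReal_le
          · simp
        refine lt_of_le_of_lt (lintegral_mono hle) ?_
        rw [lintegral_const_mul' _ _ ENNReal.ofReal_ne_top,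
          lintegral_add_right _ measurable_const, lintegral_const, measure_univ, mul_one]
        refine ENNReal.mul_lt_top ENNReal.ofReal_lt_top ?_
        refine ENNReal.add_lt_top.2 ⟨?_, one_lt_top⟩
        exact lt_of_le_of_lt (Measure.lintegral_rnDeriv_le) (by simp [measure_univ])
      refine ENNReal.add_lt_top.2 ⟨ENNReal.add_lt_top.2 ⟨?_, hint2⟩, hc2fin⟩
      refine ENNReal.mul_lt_top ?_ hent₀'
      exact ENNReal.add_lt_top.2 ⟨ENNReal.ofReal_lt_top, one_lt_top⟩
    exact ENNReal.add_lt_top.2 ⟨pA, pC⟩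
end Aux

/-- If `Φ` satisfies the growth condition and `M_Φ ≠ ∅`, then `C_Φ̂ = C_Φ`,
where `Φ̂` is the modification of `Φ` which is affine on `[0,1)` with slope the
left derivative `l` of `Φ` at `1`. -/
theorem CPhiHat_eq_CPhi (P : Measure Ω) [IsProbabilityMeasure P]
    (K : Set (Ω →ₘ[P] ℝ)) (hK : IsWedgeF K)
    (Φ : ℝ → EReal) (hconv : ConvexOnNonneg Φ)
    (hfin : ∀ x : ℝ, 0 < x → Φ x ≠ ⊤) (hbot : ∀ x : ℝ, 0 ≤ x → Φ x ≠ ⊥)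
    (hgrowth : GrowthCond Φ) (hMne : (MPhi Φ P K).Nonempty)
    (l : ℝ)
    (hl : IsLUB {r : ℝ | ∃ y : ℝ, 0 < y ∧ y < 1 ∧
      r = ((Φ 1).toReal - (Φ y).toReal) / (1 - y)} l) :
    CSet P K (MPhi (fun y =>
        if 1 ≤ y then Φ y else (((Φ 1).toReal + l * (y - 1) : ℝ) : EReal)) P K)
      = CSet P K (MPhi Φ P K) := by
  set Φh : ℝ → EReal := fun y =>
    if 1 ≤ y then Φ y else (((Φ 1).toReal + l * (y - 1) : ℝ) : EReal) with hΦh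
  -- MPhi Φ ⊆ MPhi Φh
  have hsub : MPhi Φ P K ⊆ MPhi Φh P K := by
    rintro Q ⟨hsep, hent⟩
    refine ⟨hsep, ?_⟩
    set c : ℝ≥0∞ := ENNReal.ofReal (|(Φ 1).toReal| + |l|) with hcdef
    have hptw : ∀ ω, epos (Φh ((Q.rnDeriv P ω).toReal))
        ≤ epos (Φ ((Q.rnDeriv P ω).toReal)) + c := by
      intro ω
      set x : ℝ := (Q.rnDeriv P ω).toReal with hx
      have hx0 : 0 ≤ x := ENNReal.toReal_nonneg
      by_cases h1 : 1 ≤ x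
      · simp only [hΦh, h1, if_true]
        exact le_self_add
      · simp only [hΦh, h1, if_false]
        rw [epos_coe]
        refine le_trans ?_ le_add_self
        rw [hcdef]
        apply ENNReal.ofReal_le_ofReal
        have habs : |x - 1| ≤ 1 := abs_le.2 ⟨by linarith [not_le.1 h1], by linarith [not_le.1 h1]⟩
        have : l * (x - 1) ≤ |l| := by
          calc l * (x - 1) ≤ |l * (x - 1)| := le_abs_self _
            _ = |l| * |x - 1| := abs_mul _ _
            _ ≤ |l| * 1 := mul_le_mul_of_nonneg_left habs (abs_nonneg l)
            _ = |l| := mul_one _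
        linarith [le_abs_self (Φ 1).toReal]
    show (∫⁻ ω, epos (Φh ((Q.rnDeriv P ω).toReal)) ∂P) < ⊤
    calc ∫⁻ ω, epos (Φh ((Q.rnDeriv P ω).toReal)) ∂P
        ≤ ∫⁻ ω, (epos (Φ ((Q.rnDeriv P ω).toReal)) + c) ∂P := lintegral_mono hptw
      _ = (∫⁻ ω, epos (Φ ((Q.rnDeriv P ω).toReal)) ∂P) + c * P univ := by
          rw [lintegral_add_right _ measurable_const, lintegral_const]
      _ < ⊤ := by
          refine ENNReal.add_lt_top.2 ⟨hent, ?_⟩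
          exact ENNReal.mul_lt_top ENNReal.ofReal_lt_top (measure_lt_top _ _)
  -- MPhi Φh gives finite loss entropy for Φ
  have hloss : ∀ Q : Measure Ω, Q ∈ MPhi Φh P K → FiniteLossEntropy Φ P Q := by
    rintro Q ⟨hsep, hent⟩
    show (∫⁻ ω in {ω | 1 ≤ (Q.rnDeriv P ω).toReal},
      epos (Φ ((Q.rnDeriv P ω).toReal)) ∂P) < ⊤
    have hle : ∫⁻ ω in {ω | 1 ≤ (Q.rnDeriv P ω).toReal},
        epos (Φ ((Q.rnDeriv P ω).toReal)) ∂P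
        ≤ ∫⁻ ω in {ω | 1 ≤ (Q.rnDeriv P ω).toReal},
          epos (Φh ((Q.rnDeriv P ω).toReal)) ∂P := by
      have hs : MeasurableSet {ω | 1 ≤ (Q.rnDeriv P ω).toReal} :=
        measurableSet_le measurable_const (Measure.measurable_rnDeriv Q P).ennreal_toReal
      apply lintegral_mono_ae
      rw [ae_restrict_iff' hs]
      refine ae_of_all _ fun ω hω => ?_
      simp only [hΦh, Set.mem_setOf_eq.mp hω, if_true, le_refl]
    exact lt_of_le_of_lt (hle.trans (setLIntegral_le_lintegral _ _)) hent
  apply Set.Subset.antisymm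
  · intro X hX Q hQ
    exact hX Q (hsub hQ)
  · intro X hX Q₁ hQ₁
    obtain ⟨Q₀, hQ₀⟩ := hMne
    have h₁loss : FiniteLossEntropy Φ P Q₁ := hloss Q₁ hQ₁
    have hQmem : ((2⁻¹ : NNReal) • Q₀ + (2⁻¹ : NNReal) • Q₁) ∈ MPhi Φ P K :=
      mix_mem P K hconv hfin hbot hgrowth hQ₀ hQ₁.1 h₁loss
    set Q : Measure Ω := (2⁻¹ : NNReal) • Q₀ + (2⁻¹ : NNReal) • Q₁ with hQdef
    have hX' := hX Q hQmem
    have hc : ((2⁻¹ : NNReal) : ℝ≥0∞) ≠ 0 := by norm_num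
    have hc' : ((2⁻¹ : NNReal) : ℝ≥0∞) ≠ ∞ := by norm_num
    have htr : ∀ f : Ω → ℝ, Integrable f Q → Integrable f Q₁ := by
      intro f hf
      rw [hQdef, integrable_add_measure] at hf
      have := hf.2
      rw [ENNReal.smul_def] at this
      exact (integrable_smul_measure hc hc').1 this
    have hQ1Q : Q₁ ≪ Q := by
      intro s hs
      rw [hQdef, Measure.add_apply] at hs
      have h2 : ((2⁻¹ : NNReal) • Q₁) s = 0 := (add_eq_zero.1 hs).2
      rw [Measure.smul_apply, ENNReal.smul_def, smul_eq_mul] at h2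
      rcases mul_eq_zero.1 h2 with h | h
      · exact absurd h hc
      · exact h
    refine ⟨htr _ hX'.1, fun ε hε => ?_⟩
    obtain ⟨g, hg, p, hpInt, hpPos, hdist⟩ := hX'.2 (ε/2) (by positivity)
    refine ⟨g, hg, p, htr _ hpInt, hpPos.filter_mono hQ1Q.ae_le, ?_⟩
    have hgInt : Integrable (g : Ω → ℝ) Q := (hQmem.1.2.2 g hg).1
    have hfQ : Integrable (fun ω => |X ω - (g ω - p ω)|) Q :=
      (hX'.1.sub (hgInt.sub hpInt)).abs
    rw [hQdef, integrable_add_measure] at hfQ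
    have hsplit : ∫ ω, |X ω - (g ω - p ω)| ∂Q
        = (∫ ω, |X ω - (g ω - p ω)| ∂((2⁻¹ : NNReal) • Q₀))
          + ∫ ω, |X ω - (g ω - p ω)| ∂((2⁻¹ : NNReal) • Q₁) := by
      rw [hQdef]; exact integral_add_measure hfQ.1 hfQ.2
    have h0 : 0 ≤ ∫ ω, |X ω - (g ω - p ω)| ∂((2⁻¹ : NNReal) • Q₀) :=
      integral_nonneg fun ω => abs_nonneg _
    have h1 : ∫ ω, |X ω - (g ω - p ω)| ∂((2⁻¹ : NNReal) • Q₁)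
        = 2⁻¹ * ∫ ω, |X ω - (g ω - p ω)| ∂Q₁ := by
      rw [ENNReal.smul_def, integral_smul_measure]
      norm_num
    rw [h1] at hsplit
    have := hdist
    rw [hsplit] at this
    linarith

end
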